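/- arXiv:1801.05935 — 4 statements merged into one kernel-verified Lean document; each statement's English description precedes it below -/
import Mathlib

section
/- The function H_r(y) = Σ_{i=1}^r ( log(max{1, y_{(i)}}) − max{1, y_{(i)}} + 1 ), where y_{(1)} ≥ ⋯ ≥ y_{(p)} are the decreasingly ordered coordinates of y, is concave on the nonnegative orthant [0,∞)^p. -/
/-!
Write `g t = log (max 1 t) - max 1 t + 1`. It is concave and antitone on `ℝ`: the function
`log s - s + 1` is concave and antitone on `[1, ∞)`, and `max 1` is convex. Since `g` is antitone,
an exchange argument shows that the indices of the `r` largest coordinates of `y` minimise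
`∑ i ∈ S, g (y i)` among index sets `S` of their size. So `H_r` is a finite minimum of the
concave functions `y ↦ ∑ i ∈ S, g (y i)`, hence concave, on all of `ℝ^p`.
-/

/-- `Hr p r y` is the sum of `g(y) = log(max 1 y) - max 1 y + 1` over the `r`
largest coordinates of `y` (i.e. `∑_{i=1}^r g(y_{(i)})` where
`y_{(1)} ≥ ⋯ ≥ y_{(p)}` is the decreasing rearrangement of `y`). -/
noncomputable def Hr (p r : ℕ) (y : Fin p → ℝ) : ℝ :=
  ∑ j ∈ Finset.univ.filter (fun j : Fin p => p ≤ (j : ℕ) + r),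
    (Real.log (max 1 (y (Tuple.sort y j))) - max 1 (y (Tuple.sort y j)) + 1)

open Finset

section Exchange

variable {ι M : Type*} [AddCommMonoid M] [LinearOrder M] [AddLeftMono M]

lemma Finset.sum_le_sum_of_card_eq_of_forall_le {A B : Finset ι} (hAB : #A = #B) {f : ι → M}
    (hf : ∀ a ∈ A, ∀ b ∈ B, f a ≤ f b) : ∑ i ∈ A, f i ≤ ∑ i ∈ B, f i := by
  rcases A.eq_empty_or_nonempty with rfl | hA
  · simp [card_eq_zero.mp hAB.symm]
  calc ∑ i ∈ A, f i ≤ #A • A.sup' hA f := sum_le_card_nsmul _ _ _ fun a ha ↦ le_sup' f ha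
    _ = #B • A.sup' hA f := by rw [hAB]
    _ ≤ ∑ i ∈ B, f i := card_nsmul_le_sum _ _ _ fun b hb ↦ sup'_le _ _ fun a ha ↦ hf a ha b hb

lemma Finset.sum_le_sum_of_card_eq_of_forall_sdiff_le [DecidableEq ι] {A B : Finset ι}
    (hAB : #A = #B) {f : ι → M} (hf : ∀ a ∈ A \ B, ∀ b ∈ B \ A, f a ≤ f b) :
    ∑ i ∈ A, f i ≤ ∑ i ∈ B, f i := by
  rw [← sum_inter_add_sum_sdiff A B, ← sum_inter_add_sum_sdiff B A, inter_comm B A]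
  exact add_le_add le_rfl (sum_le_sum_of_card_eq_of_forall_le (card_sdiff_comm hAB) hf)

lemma IsUpperSet.sum_le_sum_of_antitone [LinearOrder ι] {A B : Finset ι}
    (hA : IsUpperSet (A : Set ι)) (hAB : #A = #B) {f : ι → M} (hf : Antitone f) :
    ∑ i ∈ A, f i ≤ ∑ i ∈ B, f i := by
  classical
  refine sum_le_sum_of_card_eq_of_forall_sdiff_le hAB fun a ha b hb ↦ hf ?_
  rw [mem_sdiff] at ha hb
  by_contra! hab
  exact hb.2 (hA hab.le ha.1)

end Exchange

section Concave

variable {𝕜 E β ι : Type*} [Semiring 𝕜] [PartialOrder 𝕜] [AddCommMonoid E] [SMul 𝕜 E]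
  [AddCommMonoid β] [Module 𝕜 β] {s : Set E}

lemma concaveOn_finset_sum [PartialOrder β] [IsOrderedAddMonoid β] (hs : Convex 𝕜 s)
    {t : Finset ι} {f : ι → E → β}
    (hf : ∀ i ∈ t, ConcaveOn 𝕜 s (f i)) : ConcaveOn 𝕜 s fun x ↦ ∑ i ∈ t, f i x := by
  classical
  induction t using Finset.induction_on with
  | empty => simpa using concaveOn_const 0 hs
  | insert a t ha ih =>
    simp only [sum_insert ha]
    exact (hf a (mem_insert_self a t)).add (ih fun i hi ↦ hf i (mem_insert_of_mem hi))

lemma concaveOn_finset_inf' [LinearOrder β] [IsOrderedAddMonoid β] [PosSMulStrictMono 𝕜 β]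
    {t : Finset ι} (ht : t.Nonempty) {f : ι → E → β}
    (hf : ∀ i ∈ t, ConcaveOn 𝕜 s (f i)) : ConcaveOn 𝕜 s fun x ↦ t.inf' ht fun i ↦ f i x := by
  classical
  induction ht using Finset.Nonempty.cons_induction with
  | singleton a => simpa using hf a (mem_singleton_self a)
  | cons a t ha ht ih =>
    simp only [inf'_cons ht]
    exact (hf a (mem_cons_self a t)).inf (ih fun i hi ↦ hf i (mem_cons_of_mem hi))

end Concave

namespace Hr

noncomputable def g (t : ℝ) : ℝ := Real.log (max 1 t) - max 1 t + 1

lemma antitoneOn_log_sub_self_add_one : AntitoneOn (fun t ↦ Real.log t - t + 1) (Set.Ici 1) := by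
  intro a (ha : 1 ≤ a) b _ hab
  have ha0 : 0 < a := by linarith
  have hlog : Real.log b - Real.log a ≤ b / a - 1 := by
    rw [← Real.log_div (by linarith) ha0.ne']
    exact Real.log_le_sub_one_of_pos (div_pos (by linarith) ha0)
  have hdiv : b / a - 1 ≤ b - a := by
    rw [div_sub_one ha0.ne']
    exact div_le_self (by linarith) ha
  dsimp only
  linarith

lemma concaveOn_log_sub_self_add_one : ConcaveOn ℝ (Set.Ici 1) (fun t ↦ Real.log t - t + 1) := by
  have hlog : ConcaveOn ℝ (Set.Ici 1) Real.log :=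
    strictConcaveOn_log_Ioi.concaveOn.subset (Set.Ici_subset_Ioi.2 one_pos) (convex_Ici 1)
  exact (hlog.sub (convexOn_id (convex_Ici 1))).add_const 1

lemma image_max_one : (max 1 '' Set.univ : Set ℝ) = Set.Ici 1 := by
  ext x
  simp only [Set.image_univ, Set.mem_range, Set.mem_Ici]
  exact ⟨fun ⟨t, ht⟩ ↦ ht ▸ le_max_left 1 t, fun hx ↦ ⟨x, max_eq_right hx⟩⟩

lemma g_antitone : Antitone g := fun a b hab ↦
  antitoneOn_log_sub_self_add_one (le_max_left 1 a) (le_max_left 1 b) (max_le_max_left 1 hab)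

lemma g_concaveOn : ConcaveOn ℝ Set.univ g := by
  have hmax : ConvexOn ℝ Set.univ (max (1 : ℝ)) :=
    (convexOn_const 1 convex_univ).sup (convexOn_id convex_univ)
  refine ConcaveOn.comp_convexOn (g := fun t ↦ Real.log t - t + 1) ?_ hmax ?_ <;>
    rw [image_max_one]
  · exact concaveOn_log_sub_self_add_one
  · exact antitoneOn_log_sub_self_add_one

lemma concaveOn_sum_g {ι : Type*} (S : Finset ι) :
    ConcaveOn ℝ Set.univ fun y : ι → ℝ ↦ ∑ i ∈ S, g (y i) :=
  concaveOn_finset_sum convex_univ fun i _ ↦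
    g_concaveOn.comp_linearMap (LinearMap.proj (R := ℝ) (φ := fun _ : ι ↦ ℝ) i)

lemma eq_inf'_sum_g {p r : ℕ}
    (hne : (powersetCard #{j : Fin p | p ≤ (j : ℕ) + r} univ).Nonempty) (y : Fin p → ℝ) :
    Hr p r y = (powersetCard #{j : Fin p | p ≤ (j : ℕ) + r} univ).inf' hne
      fun S ↦ ∑ i ∈ S, g (y i) := by
  set T : Finset (Fin p) := {j : Fin p | p ≤ (j : ℕ) + r}
  set σ := Tuple.sort y
  have hHr : Hr p r y = ∑ j ∈ T, g (y (σ j)) := rfl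
  have hT : IsUpperSet (T : Set (Fin p)) := fun a b hab ha ↦ by
    simp only [T, coe_filter, mem_univ, true_and, Set.mem_ofPred_eq] at ha ⊢
    exact ha.trans (Nat.add_le_add_right hab r)
  have hanti : Antitone fun j ↦ g (y (σ j)) := g_antitone.comp_monotone (Tuple.monotone_sort y)
  refine le_antisymm (le_inf' _ _ fun S hS ↦ ?_) ?_
  · calc Hr p r y ≤ ∑ j ∈ S.map σ.symm.toEmbedding, g (y (σ j)) :=
          hHr ▸ hT.sum_le_sum_of_antitone (by simp [T, (mem_powersetCard.1 hS).2]) hanti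
      _ = ∑ i ∈ S, g (y i) := by simp [sum_map]
  · calc _ ≤ ∑ i ∈ T.map σ.toEmbedding, g (y i) :=
          inf'_le _ (mem_powersetCard.2 ⟨subset_univ _, card_map _⟩)
      _ = Hr p r y := by rw [sum_map, hHr]; rfl

end Hr

theorem Hr_concave_general (p r : ℕ) :
    ConcaveOn ℝ {y : Fin p → ℝ | ∀ i, 0 ≤ y i} (Hr p r) := by
  have hne : (powersetCard #{j : Fin p | p ≤ (j : ℕ) + r} univ).Nonempty :=
    powersetCard_nonempty.2 (card_le_univ _)
  rw [funext (Hr.eq_inf'_sum_g hne)]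
  exact (concaveOn_finset_inf' hne fun S _ ↦ Hr.concaveOn_sum_g S).subset (Set.subset_univ _)
    (convex_Ici 0)

theorem Hr_concave (p r : ℕ) (hr1 : 1 ≤ r) (hrp : r ≤ p) :
    ConcaveOn ℝ {y : Fin p → ℝ | ∀ i, 0 ≤ y i} (Hr p r) :=
  Hr_concave_general p r
end

section
/- For a symmetric concave function H : [0,∞)^p → ℝ invariant under coordinate permutations, the spectral function A ↦ H(λ(A)) is concave on the cone of p×p real symmetric positive semidefinite matrices, where λ(A) is the vector of eigenvalues of A. -/
/-!
For orthogonal `U`, write `A = V diag(λ) Vᵀ` and `W = Vᵀ U`; then the diagonal of `Uᵀ A U` is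
`S λ` with `S = (W ⊙ W)ᵀ` doubly stochastic. By Birkhoff's theorem `S` is a convex combination of
permutation matrices, so symmetry and concavity of `H` give `H (λ A) ≤ H (diag (Uᵀ A U))`, with
equality when `U` diagonalises `A`. Thus `H ∘ λ` is a pointwise minimum of the concave functions
`A ↦ H (diag (Uᵀ A U))`, hence concave.
-/

open Matrix Finset

namespace Matrix

variable {n : Type*} [Fintype n] [DecidableEq n]

theorem hadamard_self_mem_doublyStochastic {W : Matrix n n ℝ} (hW : W ∈ unitaryGroup n ℝ) :
    W ⊙ W ∈ doublyStochastic ℝ n := by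
  rw [mem_doublyStochastic_iff_sum]
  refine ⟨fun i j => mul_self_nonneg _, fun i => ?_, fun j => ?_⟩
  · simpa [mul_apply] using congrFun₂ (mem_unitaryGroup_iff.mp hW) i i
  · simpa [mul_apply] using congrFun₂ (mem_unitaryGroup_iff'.mp hW) j j

theorem diag_star_mul_diagonal_mul (W : Matrix n n ℝ) (d : n → ℝ) :
    (star W * diagonal d * W).diag = (W ⊙ W)ᵀ *ᵥ d := by
  ext i
  simp only [diag_apply, mul_apply, mulVec, dotProduct, star_apply, star_trivial, diagonal_apply,
    mul_ite, mul_zero, sum_ite_eq', mem_univ, if_true, transpose_apply, hadamard_apply]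
  exact sum_congr rfl fun j _ => by ring

theorem IsHermitian.diag_star_eigenvectorUnitary_mul_mul {A : Matrix n n ℝ} (hA : A.IsHermitian) :
    (star (hA.eigenvectorUnitary : Matrix n n ℝ) * A * hA.eigenvectorUnitary).diag =
      hA.eigenvalues := by
  have h := hA.conjStarAlgAut_star_eigenvectorUnitary
  simp only [Unitary.conjStarAlgAut_apply, Unitary.coe_star, star_star] at h
  rw [h]
  ext i
  simp

end Matrix

section Schur

variable {n 𝕜 β : Type*} [Fintype n] [DecidableEq n] [Field 𝕜] [LinearOrder 𝕜]
  [IsStrictOrderedRing 𝕜] [AddCommGroup β] [PartialOrder β] [IsOrderedAddMonoid β] [Module 𝕜 β]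
  [IsStrictOrderedModule 𝕜 β]

theorem ConcaveOn.le_map_mulVec_of_mem_doublyStochastic {s : Set (n → 𝕜)} {H : (n → 𝕜) → β}
    (hH : ConcaveOn 𝕜 s H) (hsym : ∀ (σ : Equiv.Perm n) (y : n → 𝕜), H (y ∘ σ) = H y)
    {S : Matrix n n 𝕜} (hS : S ∈ doublyStochastic 𝕜 n) {x : n → 𝕜}
    (hx : ∀ σ : Equiv.Perm n, x ∘ σ ∈ s) :
    H x ≤ H (S *ᵥ x) := by
  obtain ⟨w, hw₀, hw₁, rfl⟩ := exists_eq_sum_perm_of_mem_doublyStochastic hS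
  calc H x = ∑ σ, w σ • H (x ∘ σ) := by simp_rw [hsym, ← Finset.sum_smul, hw₁, one_smul]
    _ ≤ H (∑ σ, w σ • (x ∘ σ)) := hH.le_map_sum (fun σ _ => hw₀ σ) hw₁ (fun σ _ => hx σ)
    _ = H ((∑ σ, w σ • σ.permMatrix 𝕜) *ᵥ x) := by
      simp only [sum_mulVec, smul_mulVec, permMatrix_mulVec]

end Schur

theorem ConcaveOn.map_eigenvalues_le_map_diag {n : Type*} [Fintype n] [DecidableEq n]
    {s : Set (n → ℝ)} {H : (n → ℝ) → ℝ} (hH : ConcaveOn ℝ s H)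
    (hsym : ∀ (σ : Equiv.Perm n) (y : n → ℝ), H (y ∘ σ) = H y) {A : Matrix n n ℝ}
    (hA : A.IsHermitian) (hs : ∀ σ : Equiv.Perm n, hA.eigenvalues ∘ σ ∈ s) {U : Matrix n n ℝ}
    (hU : U ∈ unitaryGroup n ℝ) :
    H hA.eigenvalues ≤ H (star U * A * U).diag := by
  set W := star (hA.eigenvectorUnitary : Matrix n n ℝ) * U
  have hW : W ∈ unitaryGroup n ℝ := mul_mem (Unitary.star_mem hA.eigenvectorUnitary.2) hU
  have hconj : star U * A * U = star W * diagonal hA.eigenvalues * W := by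
    conv_lhs => rw [hA.spectral_theorem]
    simp [W, Unitary.conjStarAlgAut_apply, mul_assoc]
  rw [hconj, diag_star_mul_diagonal_mul]
  exact hH.le_map_mulVec_of_mem_doublyStochastic hsym
    (transpose_mem_doublyStochastic_iff.mpr (hadamard_self_mem_doublyStochastic hW)) hs

theorem davis_theorem (p : ℕ) (H : (Fin p → ℝ) → ℝ)
    (hsym : ∀ (π : Equiv.Perm (Fin p)) (y : Fin p → ℝ), H (y ∘ π) = H y)
    (hconc : ConcaveOn ℝ {y : Fin p → ℝ | ∀ i, 0 ≤ y i} H) :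
    ConcaveOn ℝ {A : Matrix (Fin p) (Fin p) ℝ | A.PosSemidef}
      (fun A => if h : A.IsHermitian then H h.eigenvalues else 0) := by
  have hconvex : Convex ℝ {A : Matrix (Fin p) (Fin p) ℝ | A.PosSemidef} :=
    fun A hA B hB a b ha hb _ => (hA.smul ha).add (hB.smul hb)
  refine ⟨hconvex, fun A hA B hB a b ha hb hab => ?_⟩
  have hC : (a • A + b • B).PosSemidef := hconvex hA hB ha hb hab
  set U : Matrix (Fin p) (Fin p) ℝ := (hC.1.eigenvectorUnitary : Matrix (Fin p) (Fin p) ℝ)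
  have hU : U ∈ unitaryGroup (Fin p) ℝ := hC.1.eigenvectorUnitary.2
  have key {M : Matrix (Fin p) (Fin p) ℝ} (hM : M.PosSemidef) :
      H hM.1.eigenvalues ≤ H (star U * M * U).diag :=
    hconc.map_eigenvalues_le_map_diag hsym hM.1 (fun σ i => hM.eigenvalues_nonneg (σ i)) hU
  have hdiag {M : Matrix (Fin p) (Fin p) ℝ} (hM : M.PosSemidef) (i : Fin p) :
      0 ≤ (star U * M * U).diag i :=
    (hM.conjTranspose_mul_mul_same U).diag_nonneg
  simp only [dif_pos hA.1, dif_pos hB.1, dif_pos hC.1]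
  calc a • H hA.1.eigenvalues + b • H hB.1.eigenvalues
      ≤ a • H (star U * A * U).diag + b • H (star U * B * U).diag := by
        gcongr
        exacts [key hA, key hB]
    _ ≤ H (a • (star U * A * U).diag + b • (star U * B * U).diag) :=
        hconc.2 (hdiag hA) (hdiag hB) ha hb hab
    _ = H (star U * (a • A + b • B) * U).diag := by
        simp only [Matrix.mul_add, Matrix.add_mul, Matrix.mul_smul, Matrix.smul_mul, diag_add,
          diag_smul]
    _ = H hC.1.eigenvalues := by rw [hC.1.diag_star_eigenvectorUnitary_mul_mul]
end

section
/- Under the stationarity condition L = S Σ⁻¹ L with Σ = Ψ + L Lᵀ and Ψ ≻ 0, the identity Σ⁻¹ (Σ − S) Σ⁻¹ = Ψ⁻¹ (Σ − S) Ψ⁻¹ holds. -/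
theorem stationarity_sandwich (p r : ℕ) (d : Fin p → ℝ)
    (S : Matrix (Fin p) (Fin p) ℝ) (hSsym : S.IsSymm) (hS : S.PosSemidef)
    (hΨ : (Matrix.diagonal d).PosDef)
    (L : Matrix (Fin p) (Fin r) ℝ)
    (Sig : Matrix (Fin p) (Fin p) ℝ)
    (hSig : Sig = Matrix.diagonal d + L * L.transpose)
    (hstat : L = S * Sig⁻¹ * L) :
    Sig⁻¹ * (Sig - S) * Sig⁻¹ =
      (Matrix.diagonal d)⁻¹ * (Sig - S) * (Matrix.diagonal d)⁻¹ := by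
  have hLLt : (L * L.transpose).PosSemidef := by
    simpa using Matrix.posSemidef_self_mul_conjTranspose L
  have hSgpd : Sig.PosDef := by
    rw [hSig]; exact hΨ.add_posSemidef hLLt
  have hSgdet : IsUnit Sig.det := isUnit_iff_ne_zero.mpr hSgpd.det_pos.ne'
  have hΨdet : IsUnit (Matrix.diagonal d).det := isUnit_iff_ne_zero.mpr hΨ.det_pos.ne'
  have hSgi : Sig * Sig⁻¹ = 1 := Matrix.mul_nonsing_inv _ hSgdet
  have hSgi' : Sig⁻¹ * Sig = 1 := Matrix.nonsing_inv_mul _ hSgdet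
  have hΨi : (Matrix.diagonal d) * (Matrix.diagonal d)⁻¹ = 1 := Matrix.mul_nonsing_inv _ hΨdet
  have hΨi' : (Matrix.diagonal d)⁻¹ * (Matrix.diagonal d) = 1 := Matrix.nonsing_inv_mul _ hΨdet
  have hinv : (Matrix.diagonal d)⁻¹
      = Sig⁻¹ + Sig⁻¹ * (L * L.transpose) * (Matrix.diagonal d)⁻¹ := by
    have h1 : Sig * (Matrix.diagonal d)⁻¹ = 1 + (L * L.transpose) * (Matrix.diagonal d)⁻¹ := by
      rw [hSig, add_mul, hΨi]
    calc (Matrix.diagonal d)⁻¹ = Sig⁻¹ * (Sig * (Matrix.diagonal d)⁻¹) := by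
          rw [← Matrix.mul_assoc, hSgi', Matrix.one_mul]
      _ = Sig⁻¹ + Sig⁻¹ * (L * L.transpose) * (Matrix.diagonal d)⁻¹ := by
          rw [h1, Matrix.mul_add, Matrix.mul_one]; simp [Matrix.mul_assoc]
  have hinv' : (Matrix.diagonal d)⁻¹
      = Sig⁻¹ + (Matrix.diagonal d)⁻¹ * (L * L.transpose) * Sig⁻¹ := by
    have h1 : (Matrix.diagonal d)⁻¹ * Sig = 1 + (Matrix.diagonal d)⁻¹ * (L * L.transpose) := by
      rw [hSig, Matrix.mul_add, hΨi']
    calc (Matrix.diagonal d)⁻¹ = ((Matrix.diagonal d)⁻¹ * Sig) * Sig⁻¹ := by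
          rw [Matrix.mul_assoc, hSgi, Matrix.mul_one]
      _ = _ := by rw [h1, add_mul, one_mul]
  have hL0 : (Sig - S) * (Sig⁻¹ * L) = 0 := by
    rw [Matrix.sub_mul, ← Matrix.mul_assoc, hSgi, Matrix.one_mul, ← Matrix.mul_assoc, ← hstat, sub_self]
  have hSgsym : Sig.transpose = Sig := by
    rw [hSig]; simp [Matrix.transpose_add, Matrix.transpose_mul]
  have hSgisym : (Sig⁻¹).transpose = Sig⁻¹ := by
    rw [Matrix.transpose_nonsing_inv, hSgsym]
  have hL0' : L.transpose * (Sig⁻¹ * (Sig - S)) = 0 := by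
    have h := congrArg Matrix.transpose hL0
    simpa [Matrix.transpose_mul, Matrix.transpose_sub, hSgsym, hSgisym, hSsym.eq,
      Matrix.mul_assoc] using h
  have hright : (Sig - S) * (Matrix.diagonal d)⁻¹ = (Sig - S) * Sig⁻¹ := by
    rw [hinv, Matrix.mul_add]
    have h : (Sig - S) * (Sig⁻¹ * (L * L.transpose) * (Matrix.diagonal d)⁻¹)
        = ((Sig - S) * (Sig⁻¹ * L)) * (L.transpose * (Matrix.diagonal d)⁻¹) := by
      simp [Matrix.mul_assoc]
    rw [h, hL0, Matrix.zero_mul, add_zero]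
  have hleft : (Matrix.diagonal d)⁻¹ * (Sig - S) = Sig⁻¹ * (Sig - S) := by
    rw [hinv', add_mul]
    have h : (Matrix.diagonal d)⁻¹ * (L * L.transpose) * Sig⁻¹ * (Sig - S)
        = ((Matrix.diagonal d)⁻¹ * L) * (L.transpose * (Sig⁻¹ * (Sig - S))) := by
      simp [Matrix.mul_assoc]
    rw [h, hL0', Matrix.mul_zero, add_zero]
  rw [← hleft, Matrix.mul_assoc, ← hright, ← Matrix.mul_assoc]
end

section
/- Let f = f_1 − f_2 where f_1 is ρ-strongly convex and f_2 is convex on a convex set C. If φ^{(k+1)} minimizes φ ↦ f_1(φ) − ⟨∂f_2(φ^{(k)}), φ⟩ over C (for some subgradient ∂f_2(φ^{(k)}) of f_2 at φ^{(k)}), then f(φ^{(k)}) − f(φ^{(k+1)}) ≥ (ρ/2) ‖φ^{(k+1)} − φ^{(k)}‖². -/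
open RealInnerProductSpace in
theorem dc_sufficient_decrease (p : ℕ) (C : Set (EuclideanSpace ℝ (Fin p)))
    (hC : Convex ℝ C) (ρ : ℝ) (hρ : 0 < ρ)
    (f1 f2 : EuclideanSpace ℝ (Fin p) → ℝ)
    (g1 : EuclideanSpace ℝ (Fin p) → EuclideanSpace ℝ (Fin p))
    (hdiff : ∀ x ∈ C, HasGradientAt f1 (g1 x) x)
    (hstrong : ∀ x ∈ C, ∀ y ∈ C,
      f1 x ≥ f1 y + ⟪g1 y, x - y⟫ + ρ / 2 * ‖x - y‖ ^ 2)
    (hf2 : ConvexOn ℝ C f2)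
    (φk φk1 : EuclideanSpace ℝ (Fin p)) (hφk : φk ∈ C) (hφk1 : φk1 ∈ C)
    (v : EuclideanSpace ℝ (Fin p))
    (hsub : ∀ x ∈ C, f2 x ≥ f2 φk + ⟪v, x - φk⟫)
    (hmin : ∀ x ∈ C, f1 φk1 - ⟪v, φk1⟫ ≤ f1 x - ⟪v, x⟫) :
    (f1 φk - f2 φk) - (f1 φk1 - f2 φk1) ≥ ρ / 2 * ‖φk1 - φk‖ ^ 2 := by
  set D : ℝ := ‖φk - φk1‖ ^ 2 with hD
  have hDnn : 0 ≤ D := by positivity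
  set A : ℝ := (f1 φk - ⟪v, φk⟫) - (f1 φk1 - ⟪v, φk1⟫) with hA
  have key : ∀ t : ℝ, 0 < t → t < 1 → ρ / 2 * (1 - t) * D ≤ A := by
    intro t ht0 ht1
    have hmem : t • φk + (1 - t) • φk1 ∈ C :=
      hC hφk hφk1 ht0.le (by linarith) (by ring)
    set xt := t • φk + (1 - t) • φk1 with hxt
    have e1 : φk - xt = (1 - t) • (φk - φk1) := by rw [hxt]; module
    have e2 : φk1 - xt = (-t) • (φk - φk1) := by rw [hxt]; module
    have n1 : ‖φk - xt‖ ^ 2 = (1 - t) ^ 2 * D := by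
      rw [e1, norm_smul, Real.norm_eq_abs, mul_pow, sq_abs, hD]
    have n2 : ‖φk1 - xt‖ ^ 2 = t ^ 2 * D := by
      rw [e2, norm_smul, Real.norm_eq_abs, mul_pow, sq_abs, hD]; ring
    have i1 : ⟪g1 xt, φk - xt⟫ = (1 - t) * ⟪g1 xt, φk - φk1⟫ := by
      rw [e1, real_inner_smul_right]
    have i2 : ⟪g1 xt, φk1 - xt⟫ = (-t) * ⟪g1 xt, φk - φk1⟫ := by
      rw [e2, real_inner_smul_right]
    have s1 := hstrong φk hφk xt hmem
    have s2 := hstrong φk1 hφk1 xt hmem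
    rw [i1, n1] at s1
    rw [i2, n2] at s2
    have hv : ⟪v, xt⟫ = t * ⟪v, φk⟫ + (1 - t) * ⟪v, φk1⟫ := by
      rw [hxt, inner_add_right, real_inner_smul_right, real_inner_smul_right]
    have hm := hmin xt hmem
    rw [hv] at hm
    have hA1 : t * A ≥ ρ / 2 * (t * (1 - t)) * D := by
      nlinarith [mul_le_mul_of_nonneg_left s1 ht0.le,
        mul_le_mul_of_nonneg_left s2 (by linarith : (0:ℝ) ≤ 1 - t)]
    nlinarith [mul_pos ht0 (sub_pos.mpr ht1)]
  have hAD : ρ / 2 * D ≤ A := by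
    by_contra h
    push_neg at h
    rcases eq_or_lt_of_le hDnn with hD0 | hDpos
    · have := key (1/2) (by norm_num) (by norm_num)
      have hD0' : D = 0 := hD0.symm
      rw [hD0'] at this h
      linarith
    · set ε : ℝ := ρ / 2 * D - A with hε
      have hεpos : 0 < ε := by simp [hε]; linarith
      have htpos : 0 < min (1/2) (ε / (ρ * D)) :=
        lt_min (by norm_num) (div_pos hεpos (mul_pos hρ hDpos))
      have := key _ htpos (lt_of_le_of_lt (min_le_left _ _) (by norm_num))
      have hle : min (1/2) (ε / (ρ * D)) ≤ ε / (ρ * D) := min_le_right _ _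
      set t := min (1/2) (ε / (ρ * D))
      have : ρ / 2 * (1 - t) * D = ρ / 2 * D - ρ / 2 * t * D := by ring
      have ht2 : t * (ρ * D) ≤ ε :=
        (le_div_iff₀ (mul_pos hρ hDpos)).mp hle
      have h3 : ρ / 2 * D - ρ / 2 * t * D ≤ A := by linarith
      have h4 : ρ / 2 * t * D = t * (ρ * D) / 2 := by ring
      have hX : ρ / 2 * D - A ≤ t * (ρ * D) / 2 := by linarith
      have hY : t * (ρ * D) ≤ ρ / 2 * D - A := ht2
      linarith
  have hs := hsub φk1 hφk1
  rw [inner_sub_right] at hs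
  have hnorm : ‖φk1 - φk‖ ^ 2 = D := by rw [hD, norm_sub_rev]
  rw [hnorm]
  linarith
end
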